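/- For θ ∈ (0,1], the power series coefficients p(n) of h(s) = 1 − a(1−s) + a(1+θ)^{-1}(1−s)^{1+θ} are p(0) = 1 − aθ/(1+θ), p(1) = 0, and p(n) = (n!)^{-1} θ(1−θ)(2−θ)⋯(n−2−θ) a for n ≥ 2; if moreover 0 ≤ a ≤ 1 + 1/θ, then all p(n) ≥ 0 and ∑_{n≥0} p(n) = 1, i.e. h is a probability generating function. -/

import Mathlib

/-!
For `n ≥ 2` the coefficient `p n` is `a / (1 + θ)` times the Taylor coefficient
`(-1)^n * choose (1 + θ) n` of `(1 - s)^(1 + θ)`, so `h s = (1 - a) + a s + a/(1+θ) (1 - s)^(1+θ)`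
coefficientwise, and everything reduces to the binomial series of `(1 - s)^r`, `1 ≤ r ≤ 2`, on the
closed interval up to `s = 1`. For such `r` all coefficients of index `≥ 2` are nonnegative, so the
partial sums at `s = 1` are limits of partial sums at `s < 1`, which are bounded by `(1 - s)^r ≤ 1`.
Hence the coefficients are summable, and Abel's theorem identifies their sum with
`lim_{s → 1⁻} (1 - s)^r = 0`.
-/
open Finset Filter Topology
open scoped Nat

theorem Ring.factorial_mul_choose_eq_prod_range {K : Type*} [Field K] [CharZero K] (a : K)
    (n : ℕ) : (n ! : K) * Ring.choose a n = ∏ j ∈ range n, (a - j) := by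
  rw [← descPochhammer_eval_eq_prod_range, Ring.choose_eq_smul, smul_eq_mul, ← mul_assoc,
    mul_inv_cancel₀ (Nat.cast_ne_zero.2 n.factorial_ne_zero), one_mul,
    ← Polynomial.aeval_eq_smeval, Polynomial.aeval_def, Polynomial.eval₂_eq_eval_map,
    descPochhammer_map]

noncomputable def oneSubRpowCoeff (r : ℝ) (n : ℕ) : ℝ := (-1) ^ n * Ring.choose r n

@[simp]
theorem oneSubRpowCoeff_zero (r : ℝ) : oneSubRpowCoeff r 0 = 1 := by
  simp [oneSubRpowCoeff]

@[simp]
theorem oneSubRpowCoeff_one (r : ℝ) : oneSubRpowCoeff r 1 = -r := by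
  simp [oneSubRpowCoeff]

theorem oneSubRpowCoeff_eq_prod_range (r : ℝ) (n : ℕ) :
    oneSubRpowCoeff r n = (∏ j ∈ range n, ((j : ℝ) - r)) / n ! := by
  rw [eq_div_iff (by positivity), oneSubRpowCoeff, mul_right_comm, mul_assoc,
    Ring.factorial_mul_choose_eq_prod_range]
  simpa using (prod_neg (s := range n) fun j : ℕ => r - j).symm

theorem hasSum_oneSubRpowCoeff_mul_pow (r : ℝ) {s : ℝ} (hs : |s| < 1) :
    HasSum (fun n => oneSubRpowCoeff r n * s ^ n) ((1 - s) ^ r) := by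
  have := (Real.one_add_rpow_hasFPowerSeriesOnBall_zero (a := r)).hasSum (y := -s)
    (by simpa [edist_dist, Real.dist_eq] using hs)
  simpa [FormalMultilinearSeries.ofScalars_apply_eq, binomialSeries, oneSubRpowCoeff,
    ← sub_eq_add_neg, neg_pow s, mul_comm, mul_assoc] using this

section

variable {r : ℝ} (h1 : 1 ≤ r) (h2 : r ≤ 2)
include h1 h2

theorem oneSubRpowCoeff_nonneg {n : ℕ} (hn : 2 ≤ n) : 0 ≤ oneSubRpowCoeff r n := by
  obtain ⟨m, rfl⟩ := Nat.exists_eq_add_of_le' hn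
  rw [oneSubRpowCoeff_eq_prod_range, prod_range_succ', prod_range_succ', mul_assoc]
  refine div_nonneg (mul_nonneg ?_ (mul_nonneg_of_nonpos_of_nonpos ?_ ?_)) (by positivity)
  · exact prod_nonneg fun j _ => by push_cast; linarith [(j.cast_nonneg : (0 : ℝ) ≤ j)]
  · push_cast; linarith
  · push_cast; linarith

theorem sum_range_add_two_oneSubRpowCoeff_le_one (N : ℕ) :
    ∑ n ∈ range (N + 2), oneSubRpowCoeff r n ≤ 1 := by
  have hbound : ∀ s ∈ Set.Ico (0 : ℝ) 1,
      ∑ n ∈ range (N + 2), oneSubRpowCoeff r n * s ^ n ≤ 1 := by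
    rintro s ⟨hs0, hs1⟩
    calc ∑ n ∈ range (N + 2), oneSubRpowCoeff r n * s ^ n
        ≤ (1 - s) ^ r :=
          sum_le_hasSum _
            (fun n hn => mul_nonneg (oneSubRpowCoeff_nonneg h1 h2 (by simp at hn; omega))
              (pow_nonneg hs0 n))
            (hasSum_oneSubRpowCoeff_mul_pow r (abs_lt.2 ⟨by linarith, hs1⟩))
      _ ≤ 1 := Real.rpow_le_one (by linarith) (by linarith) (by linarith)
  have hcont : Continuous fun s : ℝ => ∑ n ∈ range (N + 2), oneSubRpowCoeff r n * s ^ n := by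
    fun_prop
  simpa using le_of_tendsto ((hcont.tendsto 1).mono_left nhdsWithin_le_nhds)
    (eventually_of_mem (Ico_mem_nhdsLT zero_lt_one) hbound)

theorem summable_oneSubRpowCoeff : Summable (oneSubRpowCoeff r) := by
  rw [← summable_nat_add_iff 2]
  refine summable_of_sum_range_le (c := r) (fun n => oneSubRpowCoeff_nonneg h1 h2 (by omega))
    fun N => ?_
  have := sum_range_add_two_oneSubRpowCoeff_le_one h1 h2 N
  rw [sum_range_succ', sum_range_succ', zero_add, oneSubRpowCoeff_one,
    oneSubRpowCoeff_zero] at this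
  linarith

theorem hasSum_oneSubRpowCoeff : HasSum (oneSubRpowCoeff r) 0 := by
  have hsummable := summable_oneSubRpowCoeff h1 h2
  have habel := Real.tendsto_tsum_powerSeries_nhdsWithin_lt hsummable.hasSum.tendsto_sum_nat
  have heq : (fun s => ∑' n, oneSubRpowCoeff r n * s ^ n) =ᶠ[𝓝[<] 1] fun s => (1 - s) ^ r :=
    eventually_of_mem (Ioo_mem_nhdsLT (by norm_num : (-1 : ℝ) < 1)) fun s hs =>
      (hasSum_oneSubRpowCoeff_mul_pow r (abs_lt.2 hs)).tsum_eq
  have hlim : Tendsto (fun s : ℝ => (1 - s) ^ r) (𝓝[<] 1) (𝓝 0) := by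
    have hcont : Continuous fun s : ℝ => (1 - s) ^ r :=
      (continuous_const.sub continuous_id).rpow_const fun _ => Or.inr (by linarith)
    simpa [Real.zero_rpow (by linarith : r ≠ 0)] using
      (hcont.tendsto 1).mono_left nhdsWithin_le_nhds
  rw [← tendsto_nhds_unique (habel.congr' heq) hlim]
  exact hsummable.hasSum

theorem hasSum_oneSubRpowCoeff_mul_pow_of_mem_Ioc {s : ℝ} (hs : s ∈ Set.Ioc (-1) 1) :
    HasSum (fun n => oneSubRpowCoeff r n * s ^ n) ((1 - s) ^ r) := by
  rcases hs.2.eq_or_lt with rfl | hs1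
  · simpa [Real.zero_rpow (by linarith : r ≠ 0)] using hasSum_oneSubRpowCoeff h1 h2
  · exact hasSum_oneSubRpowCoeff_mul_pow r (abs_lt.2 ⟨hs.1, hs1⟩)

end

theorem oneSubRpowCoeff_one_add_add_two (θ : ℝ) (m : ℕ) :
    oneSubRpowCoeff (1 + θ) (m + 2) =
      (1 + θ) * θ * (∏ k ∈ Icc 1 m, ((k : ℝ) - θ)) / (m + 2)! := by
  have hIcc : ∏ k ∈ Icc 1 m, ((k : ℝ) - θ) =
      ∏ j ∈ range m, (((j + 1 + 1 : ℕ) : ℝ) - (1 + θ)) := by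
    calc ∏ k ∈ Icc 1 m, ((k : ℝ) - θ) = ∏ j ∈ range m, (((j + 1 : ℕ) : ℝ) - θ) := by
          rw [range_eq_Ico, prod_Ico_add' (fun k : ℕ => (k : ℝ) - θ) 0 m 1]
          rfl
      _ = _ := prod_congr rfl fun j _ => by push_cast; ring
  rw [oneSubRpowCoeff_eq_prod_range, prod_range_succ', prod_range_succ', hIcc]
  push_cast
  ring

noncomputable def pgfCoeff (θ a : ℝ) (n : ℕ) : ℝ :=
  if n = 0 then 1 - a * θ / (1 + θ)
  else if n = 1 then 0
  else θ * (∏ k ∈ Finset.Icc 1 (n - 2), ((k : ℝ) - θ)) * a / n.factorial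

theorem pgfCoeff_eq {θ : ℝ} (hθ : 1 + θ ≠ 0) (a : ℝ) (n : ℕ) :
    pgfCoeff θ a n = (if n = 0 then 1 - a else 0) + (if n = 1 then a else 0)
      + a / (1 + θ) * oneSubRpowCoeff (1 + θ) n := by
  rcases n with _ | _ | m
  · simp [pgfCoeff]; field_simp; ring
  · simp [pgfCoeff]; field_simp; ring
  · simp [pgfCoeff, oneSubRpowCoeff_one_add_add_two]
    field_simp

theorem pgfCoeff_nonneg {θ a : ℝ} (hθ : θ ∈ Set.Ioc 0 1) (ha : a ∈ Set.Icc 0 (1 + 1 / θ))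
    (n : ℕ) : 0 ≤ pgfCoeff θ a n := by
  obtain ⟨hθ0, hθ1⟩ := hθ
  rcases n with _ | _ | m
  · have hθa := mul_le_mul_of_nonneg_right ha.2 hθ0.le
    rw [add_mul, one_div_mul_cancel hθ0.ne', one_mul] at hθa
    rw [pgfCoeff, if_pos rfl, sub_nonneg, div_le_one (by linarith)]
    linarith
  · simp [pgfCoeff]
  · rw [pgfCoeff_eq (by linarith), if_neg (by omega), if_neg (by omega), zero_add, zero_add]
    exact mul_nonneg (div_nonneg ha.1 (by linarith))
      (oneSubRpowCoeff_nonneg (by linarith) (by linarith) (by omega))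

theorem hasSum_pgfCoeff_mul_pow {θ : ℝ} (hθ : θ ∈ Set.Ioc 0 1) (a : ℝ) {s : ℝ}
    (hs : s ∈ Set.Ioc (-1) 1) :
    HasSum (fun n => pgfCoeff θ a n * s ^ n)
      (1 - a * (1 - s) + a * (1 + θ)⁻¹ * (1 - s) ^ (1 + θ)) := by
  obtain ⟨hθ0, hθ1⟩ := hθ
  have := ((hasSum_ite_eq 0 (1 - a)).add (hasSum_ite_eq 1 (a * s))).add
    ((hasSum_oneSubRpowCoeff_mul_pow_of_mem_Ioc (r := 1 + θ) (by linarith) (by linarith)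
      hs).mul_left (a / (1 + θ)))
  convert this using 1
  · funext n
    rw [pgfCoeff_eq (by linarith)]
    rcases n with _ | _ | m <;> simp <;> ring
  · ring

theorem stmt_2 (θ a : ℝ) (hθ : θ ∈ Set.Ioc (0:ℝ) 1)
    (ha : a ∈ Set.Icc (0:ℝ) (1 + 1/θ))
    (h : ℝ → ℝ)
    (hdef : ∀ s : ℝ,
      h s = 1 - a * (1 - s) + a * (1 + θ)⁻¹ * (1 - s) ^ (1 + θ))
    (p : ℕ → ℝ)
    (hp : ∀ n : ℕ, p n =
      if n = 0 then 1 - a * θ / (1 + θ)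
      else if n = 1 then 0
      else θ * (∏ k ∈ Finset.Icc 1 (n - 2), ((k : ℝ) - θ)) * a / n.factorial) :
    (∀ s ∈ Set.Icc (0:ℝ) 1, HasSum (fun n => p n * s ^ n) (h s)) ∧
    (∀ n : ℕ, 0 ≤ p n) ∧ HasSum p 1 := by
  obtain rfl : p = pgfCoeff θ a := funext hp
  have hsum : ∀ s ∈ Set.Icc (0:ℝ) 1, HasSum (fun n => pgfCoeff θ a n * s ^ n) (h s) :=
    fun s hs => hdef s ▸ hasSum_pgfCoeff_mul_pow hθ a ⟨by linarith [hs.1], hs.2⟩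
  refine ⟨hsum, pgfCoeff_nonneg hθ ha, ?_⟩
  simpa [hdef, Real.zero_rpow (by linarith [hθ.1] : 1 + θ ≠ 0)] using
    hsum 1 ⟨zero_le_one, le_rfl⟩
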